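/- arXiv:1805.02447 — 5 statements merged into one kernel-verified Lean document; each statement's English description precedes it below -/
import Mathlib

section
/- (Order claim, Lemma 1.) Let a, b, c, d be points of the terrain with a < b < c < d. If a sees c and b sees d, then a sees d. -/
/-- `p` sees `q` on terrain `T`: the segment joining `(p, T p)` and `(q, T q)`
lies on or above the graph of `T`. -/
def Sees (T : ℝ → ℝ) (p q : ℝ) : Prop :=
  ∀ t ∈ Set.Icc (0 : ℝ) 1, T ((1 - t) * p + t * q) ≤ (1 - t) * T p + t * T q

/-- `v` left-guards `p`: `v` is on or to the left of `p` and sees `p`. -/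
def LeftGuards (T : ℝ → ℝ) (v p : ℝ) : Prop := v ≤ p ∧ Sees T v p

/-- `v` right-guards `p`: `v` is on or to the right of `p` and sees `p`. -/
def RightGuards (T : ℝ → ℝ) (v p : ℝ) : Prop := p ≤ v ∧ Sees T v p

/-- A set `S` two-sided guards `p` if some member left-guards `p` and some member
right-guards `p`. -/
def TwoSidedGuards (T : ℝ → ℝ) (S : Set ℝ) (p : ℝ) : Prop :=
  (∃ v ∈ S, LeftGuards T v p) ∧ (∃ v ∈ S, RightGuards T v p)

/-- A 1.5D terrain with `n + 1` vertices: an `x`-monotone polygonal chain, given by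
strictly increasing vertex abscissas `x 0 < ⋯ < x n` and a height function `T` which is
continuous on `[x 0, x n]` and affine on each edge interval `[x j, x (j+1)]`. -/
structure Terrain (n : ℕ) where
  x : Fin (n + 1) → ℝ
  mono : StrictMono x
  T : ℝ → ℝ
  cont : ContinuousOn T (Set.Icc (x 0) (x (Fin.last n)))
  affine : ∀ j : Fin n, ∀ t ∈ Set.Icc (0 : ℝ) 1,
    T ((1 - t) * x j.castSucc + t * x j.succ) =
      (1 - t) * T (x j.castSucc) + t * T (x j.succ)


/-!
If `a` sees `c` and `b` sees `d` with `a < b < c < d`, then `T b` lies below the chord `ac` and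
`T c` below the chord `bd`; combining the two inequalities puts both `T b` and `T c` below the
chord `ad`. The chord `ac` therefore stays below the chord `ad` on `[a, c]`, and the chord `bd`
stays below it on `[b, d]`; these two intervals cover `[a, d]`.
-/

/-- `(x, T x)` lies on or below the line through `(p, T p)` and `(q, T q)`, in the form cleared of
the denominator `q - p`; this reading is only correct for `p < q`. -/
def BelowChord (T : ℝ → ℝ) (p q x : ℝ) : Prop :=
  (q - p) * T x ≤ (q - x) * T p + (x - p) * T q

section

variable {T : ℝ → ℝ} {a b c d p q r x : ℝ}

theorem sees_iff_forall_belowChord (hpq : p < q) :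
    Sees T p q ↔ ∀ x ∈ Set.Icc p q, BelowChord T p q x := by
  have hqp : 0 < q - p := sub_pos.mpr hpq
  constructor
  · rintro h x ⟨hpx, hxq⟩
    have ht : (x - p) / (q - p) ∈ Set.Icc (0 : ℝ) 1 :=
      ⟨div_nonneg (sub_nonneg.mpr hpx) hqp.le, (div_le_one hqp).mpr (by linarith)⟩
    have hx : (1 - (x - p) / (q - p)) * p + (x - p) / (q - p) * q = x := by
      field_simp
      ring
    have h := h _ ht
    rw [hx] at h
    unfold BelowChord
    calc (q - p) * T x
        ≤ (q - p) * ((1 - (x - p) / (q - p)) * T p + (x - p) / (q - p) * T q) :=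
          mul_le_mul_of_nonneg_left h hqp.le
      _ = (q - x) * T p + (x - p) * T q := by field_simp; ring
  · rintro h t ⟨ht0, ht1⟩
    have hmem : (1 - t) * p + t * q ∈ Set.Icc p q := ⟨by nlinarith, by nlinarith⟩
    have h := h _ hmem
    unfold BelowChord at h
    refine le_of_mul_le_mul_left ?_ hqp
    linear_combination h

theorem BelowChord.of_left (hpr : p < r) (hpq : p < q) (hpx : p ≤ x)
    (hx : BelowChord T p r x) (hr : BelowChord T p q r) : BelowChord T p q x := by
  unfold BelowChord at *
  refine le_of_mul_le_mul_left ?_ (sub_pos.mpr hpr)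
  nlinarith [mul_le_mul_of_nonneg_left hx (sub_pos.mpr hpq).le,
    mul_le_mul_of_nonneg_left hr (sub_nonneg.mpr hpx)]

theorem BelowChord.of_right (hrq : r < q) (hpq : p < q) (hxq : x ≤ q)
    (hx : BelowChord T r q x) (hr : BelowChord T p q r) : BelowChord T p q x := by
  unfold BelowChord at *
  refine le_of_mul_le_mul_left ?_ (sub_pos.mpr hrq)
  nlinarith [mul_le_mul_of_nonneg_left hx (sub_pos.mpr hpq).le,
    mul_le_mul_of_nonneg_left hr (sub_nonneg.mpr hxq)]

theorem belowChord_of_interleaved (hab : a ≤ b) (hbc : b < c) (hcd : c ≤ d)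
    (hb : BelowChord T a c b) (hc : BelowChord T b d c) : BelowChord T a d c := by
  unfold BelowChord at *
  refine le_of_mul_le_mul_left ?_ (sub_pos.mpr hbc)
  nlinarith [mul_le_mul_of_nonneg_left hb (sub_nonneg.mpr hcd),
    mul_le_mul_of_nonneg_left hc (sub_nonneg.mpr (hab.trans hbc.le))]

theorem Sees.of_interleaved (hab : a ≤ b) (hbc : b < c) (hcd : c ≤ d)
    (hac : Sees T a c) (hbd : Sees T b d) : Sees T a d := by
  have hac' := (sees_iff_forall_belowChord (hab.trans_lt hbc)).mp hac
  have hbd' := (sees_iff_forall_belowChord (hbc.trans_le hcd)).mp hbd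
  have had : a < d := (hab.trans_lt hbc).trans_le hcd
  have hc : BelowChord T a d c :=
    belowChord_of_interleaved hab hbc hcd (hac' b ⟨hab, hbc.le⟩) (hbd' c ⟨hbc.le, hcd⟩)
  have hb : BelowChord T a d b :=
    (hac' b ⟨hab, hbc.le⟩).of_left (hab.trans_lt hbc) had hab hc
  refine (sees_iff_forall_belowChord had).mpr fun x ⟨hax, hxd⟩ => ?_
  rcases le_or_gt x c with hxc | hcx
  · exact (hac' x ⟨hax, hxc⟩).of_left (hab.trans_lt hbc) had hax hc
  · exact (hbd' x ⟨(hbc.trans hcx).le, hxd⟩).of_right (hbc.trans_le hcd) had hxd hb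

end

theorem order_claim_general {n : ℕ} (Ter : Terrain n) (a b c d : ℝ)
    (hab : a < b) (hbc : b < c) (hcd : c < d)
    (hac : Sees Ter.T a c) (hbd : Sees Ter.T b d) :
    Sees Ter.T a d :=
  hac.of_interleaved hab.le hbc hcd.le hbd

/-- **Order claim (Lemma 1).** If `a < b < c < d` are points of the terrain, `a` sees `c`
and `b` sees `d`, then `a` sees `d`. -/
theorem order_claim {n : ℕ} (Ter : Terrain n) (hn : 1 ≤ n) (a b c d : ℝ)
    (ha : a ∈ Set.Icc (Ter.x 0) (Ter.x (Fin.last n)))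
    (hb : b ∈ Set.Icc (Ter.x 0) (Ter.x (Fin.last n)))
    (hc : c ∈ Set.Icc (Ter.x 0) (Ter.x (Fin.last n)))
    (hd : d ∈ Set.Icc (Ter.x 0) (Ter.x (Fin.last n)))
    (hab : a < b) (hbc : b < c) (hcd : c < d)
    (hac : Sees Ter.T a c) (hbd : Sees Ter.T b d) :
    Sees Ter.T a d :=
  order_claim_general Ter a b c d hab hbc hcd hac hbd
end

section
/- (Lemma 2, discretization of one edge.) For each edge eⱼ of the terrain, there exist two points p and q with xⱼ < p ≤ q < xⱼ₊₁ (in particular excluding the endpoints xⱼ and xⱼ₊₁) such that for every set S of vertices of the terrain: if S two-sided guards every vertex of the terrain and S two-sided guards both p and q, then S two-sided guards every point of the closed edge [xⱼ, xⱼ₊₁]. -/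
open Set Filter Topology

lemma exists_combo_eq_of_mem_Icc {p q u : ℝ} (hpq : p ≤ q) (hu : u ∈ Icc p q) :
    ∃ t ∈ Icc (0 : ℝ) 1, (1 - t) * p + t * q = u := by
  rwa [← segment_eq_Icc hpq, segment_eq_image] at hu

lemma combo_mem_uIcc {p q t : ℝ} (ht : t ∈ Icc (0 : ℝ) 1) : (1 - t) * p + t * q ∈ uIcc p q := by
  rw [← segment_eq_uIcc, segment_eq_image]
  exact ⟨t, ht, rfl⟩

lemma exists_line_through {p q : ℝ} (hpq : p ≠ q) (y₁ y₂ : ℝ) :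
    ∃ α β : ℝ, y₁ = α * p + β ∧ y₂ = α * q + β := by
  have hqp : q - p ≠ 0 := sub_ne_zero.2 hpq.symm
  refine ⟨(y₂ - y₁) / (q - p), y₁ - (y₂ - y₁) / (q - p) * p, by ring, ?_⟩
  field_simp
  ring

section Sees

variable {T : ℝ → ℝ}

lemma sees_comm {p q : ℝ} : Sees T p q ↔ Sees T q p := by
  have key : ∀ {p q : ℝ}, Sees T p q → Sees T q p := fun {p q} h t ht => by
    have h' := h (1 - t) ⟨by linarith [ht.2], by linarith [ht.1]⟩
    rw [show (1 - (1 - t)) * p + (1 - t) * q = (1 - t) * q + t * p by ring] at h'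
    linarith
  exact ⟨key, key⟩

lemma sees_of_le_line {p q α β : ℝ} (hle : ∀ u ∈ uIcc p q, T u ≤ α * u + β)
    (hp : T p = α * p + β) (hq : T q = α * q + β) : Sees T p q := fun t ht =>
  calc T ((1 - t) * p + t * q) ≤ α * ((1 - t) * p + t * q) + β := hle _ (combo_mem_uIcc ht)
    _ = (1 - t) * T p + t * T q := by rw [hp, hq]; ring

lemma Sees.le_line {p q α β : ℝ} (h : Sees T p q) (hpq : p ≤ q) (hp : T p = α * p + β)
    (hq : T q = α * q + β) {u : ℝ} (hu : u ∈ Icc p q) : T u ≤ α * u + β := by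
  obtain ⟨t, ht, rfl⟩ := exists_combo_eq_of_mem_Icc hpq hu
  calc T ((1 - t) * p + t * q) ≤ (1 - t) * T p + t * T q := h t ht
    _ = α * ((1 - t) * p + t * q) + β := by rw [hp, hq]; ring

lemma sees_of_eq_line {A B α β : ℝ} (hT : ∀ u ∈ Icc A B, T u = α * u + β) {z₁ z₂ : ℝ}
    (hz₁ : z₁ ∈ Icc A B) (hz₂ : z₂ ∈ Icc A B) : Sees T z₁ z₂ :=
  sees_of_le_line (fun u hu => (hT u (uIcc_subset_Icc hz₁ hz₂ hu)).le) (hT z₁ hz₁) (hT z₂ hz₂)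

/-- The order claim of terrain guarding. -/
lemma sees_of_interleaved {a b c d : ℝ} (hab : a ≤ b) (hbc : b < c) (hcd : c ≤ d)
    (hac : Sees T a c) (hbd : Sees T b d) : Sees T a d := by
  have hac' : a < c := hab.trans_lt hbc
  have hbd' : b < d := hbc.trans_le hcd
  have had : a < d := hac'.trans_le hcd
  obtain ⟨α₁, β₁, ha₁, hc₁⟩ := exists_line_through hac'.ne (T a) (T c)
  obtain ⟨α₂, β₂, hb₂, hd₂⟩ := exists_line_through hbd'.ne (T b) (T d)
  obtain ⟨α₃, β₃, ha₃, hd₃⟩ := exists_line_through had.ne (T a) (T d)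
  have h₁ {u} (hu : u ∈ Icc a c) := hac.le_line hac'.le ha₁ hc₁ hu
  have h₂ {u} (hu : u ∈ Icc b d) := hbd.le_line hbd'.le hb₂ hd₂ hu
  -- `bd` crosses `ac` from below, so both chords lie below the chord `ad` on `[a, d]`
  have hb : α₂ * b + β₂ ≤ α₁ * b + β₁ := hb₂ ▸ h₁ ⟨hab, hbc.le⟩
  have hc : α₁ * c + β₁ ≤ α₂ * c + β₂ := hc₁ ▸ h₂ ⟨hbc.le, hcd⟩
  have hα₁₂ : α₁ ≤ α₂ := by nlinarith
  have hα₁₃ : α₁ ≤ α₃ := by nlinarith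
  have hα₃₂ : α₃ ≤ α₂ := by nlinarith
  refine sees_of_le_line (fun u hu => ?_) ha₃ hd₃
  rw [uIcc_of_le had.le] at hu
  rcases le_or_gt u c with huc | hcu
  · exact (h₁ ⟨hu.1, huc⟩).trans (by nlinarith [hu.1])
  · exact (h₂ ⟨hbc.le.trans hcu.le, hu.2⟩).trans (by nlinarith [hu.2])

end Sees

namespace Filter

lemma eventually_imp_forall_of_not {α : Type*} {l : Filter α} {P : α → Prop} {s : Set α}
    (h : ∀ z ∈ s, ¬P z → ∀ᶠ p in l, ¬P p) : ∀ᶠ p in l, P p → ∀ z ∈ s, P z := by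
  by_cases hs : ∀ z ∈ s, P z
  · exact .of_forall fun _ _ => hs
  push Not at hs
  obtain ⟨z, hz, hPz⟩ := hs
  filter_upwards [h z hz hPz] with p hp hPp using absurd hPp hp

end Filter

section Edge

variable {T : ℝ → ℝ} {A B α β : ℝ} {V : Set ℝ}

lemma eventually_leftGuards_imp_forall (hT : ∀ u ∈ Icc A B, T u = α * u + β) (hV : V.Finite)
    (hVAB : ∀ v ∈ V, v ∉ Ioo A B) :
    ∀ᶠ p in 𝓝[>] A, ∀ v ∈ V, LeftGuards T v p → ∀ z ∈ Ioc A B, LeftGuards T v z := by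
  refine hV.eventually_all.2 fun v hv => eventually_imp_forall_of_not fun z hz hvz => ?_
  filter_upwards [Ioo_mem_nhdsGT hz.1] with p hp ⟨hvp, hsee⟩
  have hvA : v ≤ A := not_lt.1 fun hAv => hVAB v hv ⟨hAv, hvp.trans_lt (hp.2.trans_le hz.2)⟩
  have hAz : Sees T A z := sees_of_eq_line hT ⟨le_rfl, hz.1.le.trans hz.2⟩ ⟨hz.1.le, hz.2⟩
  exact hvz ⟨hvp.trans hp.2.le, sees_of_interleaved hvA hp.1 hp.2.le hsee hAz⟩

lemma eventually_rightGuards_imp_forall (hT : ∀ u ∈ Icc A B, T u = α * u + β) (hV : V.Finite)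
    (hVAB : ∀ v ∈ V, v ∉ Ioo A B) :
    ∀ᶠ q in 𝓝[<] B, ∀ v ∈ V, RightGuards T v q → ∀ z ∈ Ico A B, RightGuards T v z := by
  refine hV.eventually_all.2 fun v hv => eventually_imp_forall_of_not fun z hz hvz => ?_
  filter_upwards [Ioo_mem_nhdsLT hz.2] with q hq ⟨hqv, hsee⟩
  have hBv : B ≤ v := not_lt.1 fun hvB => hVAB v hv ⟨hz.1.trans_lt (hq.1.trans_le hqv), hvB⟩
  have hzB : Sees T z B := sees_of_eq_line hT ⟨hz.1, hz.2.le⟩ ⟨hz.1.trans hz.2.le, le_rfl⟩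
  exact hvz ⟨hq.1.le.trans hqv,
    sees_comm.1 (sees_of_interleaved hq.1.le hq.2 hBv hzB (sees_comm.1 hsee))⟩

theorem exists_edge_discretization (hAB : A < B) (hT : ∀ u ∈ Icc A B, T u = α * u + β)
    (hV : V.Finite) (hVAB : ∀ v ∈ V, v ∉ Ioo A B) :
    ∃ p q : ℝ, A < p ∧ p ≤ q ∧ q < B ∧ ∀ S ⊆ V,
      TwoSidedGuards T S A → TwoSidedGuards T S B →
      TwoSidedGuards T S p → TwoSidedGuards T S q → ∀ z ∈ Icc A B, TwoSidedGuards T S z := by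
  obtain ⟨p, hpV, hp⟩ := ((eventually_leftGuards_imp_forall hT hV hVAB).and
    (Ioo_mem_nhdsGT (left_lt_add_div_two.2 hAB))).exists
  obtain ⟨q, hqV, hq⟩ := ((eventually_rightGuards_imp_forall hT hV hVAB).and
    (Ioo_mem_nhdsLT (add_div_two_lt_right.2 hAB))).exists
  refine ⟨p, q, hp.1, (hp.2.trans hq.1).le, hq.2, fun S hSV hA hB hpS hqS z hz => ⟨?_, ?_⟩⟩
  · rcases hz.1.eq_or_lt with rfl | hAz
    · exact hA.1
    obtain ⟨v, hvS, hv⟩ := hpS.1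
    exact ⟨v, hvS, hpV v (hSV hvS) hv z ⟨hAz, hz.2⟩⟩
  · rcases hz.2.eq_or_lt with rfl | hzB
    · exact hB.2
    obtain ⟨v, hvS, hv⟩ := hqS.2
    exact ⟨v, hvS, hqV v (hSV hvS) hv z ⟨hz.1, hzB⟩⟩

end Edge

namespace Terrain

variable {n : ℕ} (Ter : Terrain n) (j : Fin n)

lemma exists_line_edge :
    ∃ α β : ℝ, ∀ u ∈ Icc (Ter.x j.castSucc) (Ter.x j.succ), Ter.T u = α * u + β := by
  obtain ⟨α, β, hA, hB⟩ := exists_line_through (Ter.mono (Fin.castSucc_lt_succ (i := j))).ne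
    (Ter.T (Ter.x j.castSucc)) (Ter.T (Ter.x j.succ))
  refine ⟨α, β, fun u hu => ?_⟩
  obtain ⟨t, ht, rfl⟩ := exists_combo_eq_of_mem_Icc (Ter.mono.monotone (Fin.castSucc_le_succ j)) hu
  rw [Ter.affine j t ht, hA, hB]
  ring

lemma not_mem_Ioo_edge : ∀ v ∈ range Ter.x, v ∉ Ioo (Ter.x j.castSucc) (Ter.x j.succ) := by
  rintro _ ⟨i, rfl⟩ ⟨hji, hij⟩
  rw [Ter.mono.lt_iff_lt, Fin.castSucc_lt_iff_succ_le] at hji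
  exact (Ter.mono.lt_iff_lt.1 hij).not_ge hji

end Terrain

theorem edge_discretization_general {n : ℕ} (Ter : Terrain n) (j : Fin n) :
    ∃ p q : ℝ, Ter.x j.castSucc < p ∧ p ≤ q ∧ q < Ter.x j.succ ∧
      ∀ S : Set ℝ, S ⊆ Set.range Ter.x →
        (∀ v ∈ Set.range Ter.x, TwoSidedGuards Ter.T S v) →
        TwoSidedGuards Ter.T S p → TwoSidedGuards Ter.T S q →
        ∀ z ∈ Set.Icc (Ter.x j.castSucc) (Ter.x j.succ), TwoSidedGuards Ter.T S z := by
  obtain ⟨α, β, hT⟩ := Ter.exists_line_edge j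
  obtain ⟨p, q, hAp, hpq, hqB, hguards⟩ := exists_edge_discretization
    (Ter.mono Fin.castSucc_lt_succ) hT (finite_range Ter.x) (Ter.not_mem_Ioo_edge j)
  exact ⟨p, q, hAp, hpq, hqB, fun S hS hvert =>
    hguards S hS (hvert _ (mem_range_self _)) (hvert _ (mem_range_self _))⟩

/-- **Lemma 2 (discretization of one edge).** For each edge of the terrain there exist two
interior points `p ≤ q` of the edge such that any vertex set `S` that two-sided guards all
vertices together with `p` and `q` two-sided guards the whole closed edge. -/
theorem edge_discretization {n : ℕ} (Ter : Terrain n) (hn : 1 ≤ n) (j : Fin n) :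
    ∃ p q : ℝ, Ter.x j.castSucc < p ∧ p ≤ q ∧ q < Ter.x j.succ ∧
      ∀ S : Set ℝ, S ⊆ Set.range Ter.x →
        (∀ v ∈ Set.range Ter.x, TwoSidedGuards Ter.T S v) →
        TwoSidedGuards Ter.T S p → TwoSidedGuards Ter.T S q →
        ∀ z ∈ Set.Icc (Ter.x j.castSucc) (Ter.x j.succ), TwoSidedGuards Ter.T S z :=
  edge_discretization_general Ter j
end

section
/- (Discretization corollary.) There exists a finite set X of points of the terrain with |X| ≤ 2(n−1) such that for every set S of vertices of the terrain: if S two-sided guards every vertex of the terrain and every point of X, then S two-sided guards every point of the terrain [x₁, xₙ]. -/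
open Set Filter Topology

lemma chord_eq_slope (T : ℝ → ℝ) (v q t : ℝ) :
    (1 - t) * T v + t * T q = T v + slope T v q * ((1 - t) * v + t * q - v) := by
  have h := sub_smul_slope T v q
  simp only [smul_eq_mul, vsub_eq_sub] at h
  linear_combination (-t) * h

lemma sees_iff_forall_le_chord {T : ℝ → ℝ} {v q : ℝ} (hvq : v ≤ q) :
    Sees T v q ↔ ∀ x ∈ Icc v q, T x ≤ T v + slope T v q * (x - v) := by
  rw [← segment_eq_Icc hvq, segment_eq_image, forall_mem_image]
  simp only [Sees, smul_eq_mul, chord_eq_slope]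

lemma sees_comp_neg {T : ℝ → ℝ} {v q : ℝ} : Sees (fun y ↦ T (-y)) (-v) (-q) ↔ Sees T v q := by
  simp only [Sees, mul_neg, ← neg_add, neg_neg]

lemma Sees.of_affineOn_left {T : ℝ → ℝ} {a b m c v p q : ℝ}
    (hT : ∀ y ∈ Icc a b, T y = m * y + c)
    (hva : v ≤ a) (hap : a < p) (hpq : p ≤ q) (hqb : q ≤ b) (hp : Sees T v p) : Sees T v q := by
  have hvp : v < p := hva.trans_lt hap
  have hvq : v < q := hvp.trans_le hpq
  rw [sees_iff_forall_le_chord hvp.le] at hp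
  rw [sees_iff_forall_le_chord hvq.le]
  set sp := slope T v p
  set sq := slope T v q
  have hsp : (p - v) * sp = T p - T v := by simpa using sub_smul_slope T v p
  have hsq : (q - v) * sq = T q - T v := by simpa using sub_smul_slope T v q
  have hTa := hT a ⟨le_rfl, hap.le.trans (hpq.trans hqb)⟩
  have hTp := hT p ⟨hap.le, hpq.trans hqb⟩
  have hTq := hT q ⟨hap.le.trans hpq, hqb⟩
  have hsp_m : sp ≤ m := by
    have := hp a ⟨hva, hap.le⟩
    exact le_of_mul_le_mul_right (by nlinarith) (sub_pos.2 hap)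
  have hsq_eq : sq * (q - v) = sp * (p - v) + m * (q - p) := by linarith
  have hsp_sq : sp ≤ sq := le_of_mul_le_mul_right (by nlinarith) (sub_pos.2 hvq)
  have hsq_m : sq ≤ m := le_of_mul_le_mul_right (by nlinarith) (sub_pos.2 hvq)
  intro x hx
  rcases le_total x p with hxp | hpx
  · have := hp x ⟨hx.1, hxp⟩
    nlinarith [hx.1]
  · have := hT x ⟨hap.le.trans hpx, hx.2.trans hqb⟩
    nlinarith [hx.2]

lemma Sees.of_affineOn_right {T : ℝ → ℝ} {a b m c v p q : ℝ}
    (hT : ∀ y ∈ Icc a b, T y = m * y + c)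
    (hbv : b ≤ v) (hpb : p < b) (hqp : q ≤ p) (haq : a ≤ q) (hp : Sees T v p) : Sees T v q := by
  rw [← sees_comp_neg] at hp ⊢
  refine hp.of_affineOn_left (a := -b) (b := -a) (m := -m) (c := c) (fun y hy ↦ ?_)
    (neg_le_neg hbv) (neg_lt_neg hpb) (neg_le_neg hqp) (neg_le_neg haq)
  rw [hT (-y) ⟨le_neg.2 hy.2, neg_le.2 hy.1⟩]
  ring

lemma eventually_nhdsGT_sees_imp {T : ℝ → ℝ} {a b m c v : ℝ} (hT : ∀ y ∈ Icc a b, T y = m * y + c)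
    (hva : v ≤ a) : ∀ᶠ w in 𝓝[>] a, Sees T v w → ∀ q ∈ Ioc a b, Sees T v q := by
  by_cases h : ∀ q ∈ Ioc a b, Sees T v q
  · exact .of_forall fun _ _ ↦ h
  push Not at h
  obtain ⟨q, hq, hvq⟩ := h
  filter_upwards [Ioo_mem_nhdsGT hq.1] with w hw hvw
  exact absurd (hvw.of_affineOn_left hT hva hw.1 hw.2.le hq.2) hvq

lemma eventually_nhdsLT_sees_imp {T : ℝ → ℝ} {a b m c v : ℝ} (hT : ∀ y ∈ Icc a b, T y = m * y + c)
    (hbv : b ≤ v) : ∀ᶠ w in 𝓝[<] b, Sees T v w → ∀ q ∈ Ico a b, Sees T v q := by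
  by_cases h : ∀ q ∈ Ico a b, Sees T v q
  · exact .of_forall fun _ _ ↦ h
  push Not at h
  obtain ⟨q, hq, hvq⟩ := h
  filter_upwards [Ioo_mem_nhdsLT hq.2] with w hw hvw
  exact absurd (hvw.of_affineOn_right hT hbv hw.2 hw.1.le hq.1) hvq

lemma exists_left_test_point {T : ℝ → ℝ} {a b m c : ℝ} (hab : a < b)
    (hT : ∀ y ∈ Icc a b, T y = m * y + c) {ι : Type*} [Finite ι] (v : ι → ℝ) :
    ∃ w ∈ Ioo a b, ∀ i, v i ≤ a → Sees T (v i) w → ∀ q ∈ Ioc a b, Sees T (v i) q := by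
  have hv : ∀ᶠ w in 𝓝[>] a, ∀ i, v i ≤ a → Sees T (v i) w → ∀ q ∈ Ioc a b, Sees T (v i) q :=
    eventually_all.2 fun i ↦ eventually_imp_distrib_left.2 (eventually_nhdsGT_sees_imp hT)
  exact (Eventually.and (Ioo_mem_nhdsGT hab) hv).exists

lemma exists_right_test_point {T : ℝ → ℝ} {a b m c : ℝ} (hab : a < b)
    (hT : ∀ y ∈ Icc a b, T y = m * y + c) {ι : Type*} [Finite ι] (v : ι → ℝ) :
    ∃ w ∈ Ioo a b, ∀ i, b ≤ v i → Sees T (v i) w → ∀ q ∈ Ico a b, Sees T (v i) q := by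
  have hv : ∀ᶠ w in 𝓝[<] b, ∀ i, b ≤ v i → Sees T (v i) w → ∀ q ∈ Ico a b, Sees T (v i) q :=
    eventually_all.2 fun i ↦ eventually_imp_distrib_left.2 (eventually_nhdsLT_sees_imp hT)
  exact (Eventually.and (Ioo_mem_nhdsLT hab) hv).exists

namespace Terrain

variable {n : ℕ} (Ter : Terrain n)

lemma edge_lt (j : Fin n) : Ter.x j.castSucc < Ter.x j.succ :=
  Ter.mono Fin.castSucc_lt_succ

lemma affineOn_edge (j : Fin n) : ∃ m c, ∀ y ∈ Icc (Ter.x j.castSucc) (Ter.x j.succ),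
    Ter.T y = m * y + c := by
  refine ⟨slope Ter.T (Ter.x j.castSucc) (Ter.x j.succ),
    Ter.T (Ter.x j.castSucc) - slope Ter.T (Ter.x j.castSucc) (Ter.x j.succ) * Ter.x j.castSucc, ?_⟩
  rw [← segment_eq_Icc (Ter.edge_lt j).le, segment_eq_image, forall_mem_image]
  intro t ht
  simp only [smul_eq_mul, Ter.affine j t ht, chord_eq_slope]
  ring

lemma edge_subset_Icc (j : Fin n) :
    Icc (Ter.x j.castSucc) (Ter.x j.succ) ⊆ Icc (Ter.x 0) (Ter.x (Fin.last n)) :=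
  Icc_subset_Icc (Ter.mono.monotone (Fin.zero_le _)) (Ter.mono.monotone (Fin.le_last _))

lemma exists_mem_edge_of_notMem_range {p : ℝ} (hp : p ∈ Icc (Ter.x 0) (Ter.x (Fin.last n)))
    (hpx : p ∉ range Ter.x) : ∃ j : Fin n, p ∈ Ioo (Ter.x j.castSucc) (Ter.x j.succ) := by
  by_contra! h
  have hle : ∀ i, Ter.x i ≤ p := Fin.induction hp.1 fun j hj ↦
    not_lt.1 fun hlt ↦ h j ⟨lt_of_le_of_ne hj fun he ↦ hpx ⟨_, he⟩, hlt⟩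
  exact hpx ⟨Fin.last n, le_antisymm (hle _) hp.2⟩

lemma exists_leftGuards_test_point (j : Fin n) :
    ∃ w ∈ Ioo (Ter.x j.castSucc) (Ter.x j.succ), ∀ v ∈ range Ter.x, LeftGuards Ter.T v w →
      ∀ q ∈ Ioc (Ter.x j.castSucc) (Ter.x j.succ), LeftGuards Ter.T v q := by
  obtain ⟨m, c, hT⟩ := Ter.affineOn_edge j
  obtain ⟨w, hw, hsees⟩ := exists_left_test_point (Ter.edge_lt j) hT Ter.x
  refine ⟨w, hw, ?_⟩
  rintro _ ⟨i, rfl⟩ ⟨hiw, hiw_sees⟩ q hq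
  have hij : Ter.x i ≤ Ter.x j.castSucc :=
    Ter.mono.monotone (Fin.le_castSucc_iff.2 (Ter.mono.lt_iff_lt.1 (hiw.trans_lt hw.2)))
  exact ⟨hij.trans hq.1.le, hsees i hij hiw_sees q hq⟩

lemma exists_rightGuards_test_point (j : Fin n) :
    ∃ w ∈ Ioo (Ter.x j.castSucc) (Ter.x j.succ), ∀ v ∈ range Ter.x, RightGuards Ter.T v w →
      ∀ q ∈ Ico (Ter.x j.castSucc) (Ter.x j.succ), RightGuards Ter.T v q := by
  obtain ⟨m, c, hT⟩ := Ter.affineOn_edge j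
  obtain ⟨w, hw, hsees⟩ := exists_right_test_point (Ter.edge_lt j) hT Ter.x
  refine ⟨w, hw, ?_⟩
  rintro _ ⟨i, rfl⟩ ⟨hwi, hiw_sees⟩ q hq
  have hji : Ter.x j.succ ≤ Ter.x i :=
    Ter.mono.monotone (Fin.castSucc_lt_iff_succ_le.1 (Ter.mono.lt_iff_lt.1 (hw.1.trans_le hwi)))
  exact ⟨hq.2.le.trans hji, hsees i hji hiw_sees q hq⟩

end Terrain

theorem discretization_general {n : ℕ} (Ter : Terrain n) :
    ∃ X : Finset ℝ,
      (↑X : Set ℝ) ⊆ Set.Icc (Ter.x 0) (Ter.x (Fin.last n)) ∧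
      X.card ≤ 2 * n ∧
      ∀ S : Set ℝ, S ⊆ Set.range Ter.x →
        (∀ v ∈ Set.range Ter.x, TwoSidedGuards Ter.T S v) →
        (∀ p ∈ X, TwoSidedGuards Ter.T S p) →
        ∀ p ∈ Set.Icc (Ter.x 0) (Ter.x (Fin.last n)), TwoSidedGuards Ter.T S p := by
  classical
  choose wL hwL_mem hwL using Ter.exists_leftGuards_test_point
  choose wR hwR_mem hwR using Ter.exists_rightGuards_test_point
  refine ⟨Finset.univ.image wL ∪ Finset.univ.image wR, ?_, ?_, ?_⟩
  · intro w hw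
    simp only [Finset.coe_union, Finset.coe_image, Finset.coe_univ, image_univ, mem_union,
      mem_range] at hw
    rcases hw with ⟨j, rfl⟩ | ⟨j, rfl⟩
    · exact Ter.edge_subset_Icc j (Ioo_subset_Icc_self (hwL_mem j))
    · exact Ter.edge_subset_Icc j (Ioo_subset_Icc_self (hwR_mem j))
  · calc _ ≤ (Finset.univ.image wL).card + (Finset.univ.image wR).card := Finset.card_union_le _ _
      _ ≤ n + n := add_le_add (Finset.card_image_le.trans_eq (Finset.card_fin n))
          (Finset.card_image_le.trans_eq (Finset.card_fin n))
      _ = 2 * n := (two_mul n).symm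
  intro S hS hV hX p hp
  by_cases hpx : p ∈ range Ter.x
  · exact hV p hpx
  obtain ⟨j, hpj⟩ := Ter.exists_mem_edge_of_notMem_range hp hpx
  obtain ⟨⟨u, huS, hu⟩, -⟩ := hX (wL j) (by simp)
  obtain ⟨-, ⟨v, hvS, hv⟩⟩ := hX (wR j) (by simp)
  exact ⟨⟨u, huS, hwL j u (hS huS) hu p (Ioo_subset_Ioc_self hpj)⟩,
    ⟨v, hvS, hwR j v (hS hvS) hv p (Ioo_subset_Ico_self hpj)⟩⟩

/-- **Discretization corollary.** There is a finite set `X` of points of the terrain, of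
cardinality at most `2 * n` (that is, twice the number of vertices minus one), such that any
vertex set `S` that two-sided guards all vertices and all points of `X` two-sided guards
every point of the terrain. -/
theorem discretization {n : ℕ} (Ter : Terrain n) (hn : 1 ≤ n) :
    ∃ X : Finset ℝ,
      (↑X : Set ℝ) ⊆ Set.Icc (Ter.x 0) (Ter.x (Fin.last n)) ∧
      X.card ≤ 2 * n ∧
      ∀ S : Set ℝ, S ⊆ Set.range Ter.x →
        (∀ v ∈ Set.range Ter.x, TwoSidedGuards Ter.T S v) →
        (∀ p ∈ X, TwoSidedGuards Ter.T S p) →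
        ∀ p ∈ Set.Icc (Ter.x 0) (Ter.x (Fin.last n)), TwoSidedGuards Ter.T S p :=
  discretization_general Ter
end

section
/- (Lemma 9.) Let v be a vertex of the terrain, let x be a point of the terrain with v < x, and let L(v) be the leftmost vertex that sees v, with L(v) < v. If v sees x and L(v) does not see x, then v = L(x), i.e., v is the leftmost vertex that sees x. -/
/-
Let `B` be the line through `(l, T l)` and `(v, T v)`. Since `l` sees `v` and `v` sees `p` but
`l` does not see `p`, the point `v` lies strictly above the chord `lp`, so `p` lies strictly
below `B`. A point `u < v` seeing `p` therefore lies strictly above `B`: the chord `up` is above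
`B` at `v` and below it at `p`. No point of `[l, v)` lies above `B`, because `l` sees `v`. If
`u < l` were a vertex above `B`, the rightmost vertex `w < l` on or above `B` would see `v`, as
the vertices strictly between `w` and `l` lie below `B`; this contradicts the choice of `l`.
-/

open Set

section Lines

variable {c₁ m₁ c₂ m₂ a b x : ℝ}

lemma exists_line_through_s14 (y₁ y₂ : ℝ) (hab : a ≠ b) :
    ∃ c m : ℝ, c + m * a = y₁ ∧ c + m * b = y₂ := by
  have h : b - a ≠ 0 := sub_ne_zero.2 hab.symm
  refine ⟨(b * y₁ - a * y₂) / (b - a), (y₂ - y₁) / (b - a), ?_, ?_⟩ <;>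
  · field_simp
    ring

lemma line_le_line_of_le_of_le (hax : a ≤ x) (hxb : x ≤ b)
    (ha : c₁ + m₁ * a ≤ c₂ + m₂ * a) (hb : c₁ + m₁ * b ≤ c₂ + m₂ * b) :
    c₁ + m₁ * x ≤ c₂ + m₂ * x := by
  rcases hax.eq_or_lt with rfl | hax
  · exact ha
  nlinarith [mul_nonneg (sub_nonneg.2 ha) (sub_nonneg.2 hxb),
    mul_nonneg (sub_nonneg.2 hb) (sub_nonneg.2 hax.le), hax.trans_le hxb]

lemma line_lt_line_of_ge_of_lt (hab : a < b) (hbx : b ≤ x)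
    (ha : c₂ + m₂ * a ≤ c₁ + m₁ * a) (hb : c₁ + m₁ * b < c₂ + m₂ * b) :
    c₁ + m₁ * x < c₂ + m₂ * x := by
  nlinarith [mul_nonneg (sub_nonneg.2 ha) (sub_nonneg.2 hbx),
    mul_pos (sub_pos.2 hb) (sub_pos.2 hab)]

lemma line_lt_line_of_le_of_gt (hxa : x < a) (hab : a < b)
    (ha : c₁ + m₁ * a ≤ c₂ + m₂ * a) (hb : c₂ + m₂ * b < c₁ + m₁ * b) :
    c₁ + m₁ * x < c₂ + m₂ * x := by
  nlinarith [mul_nonneg (sub_nonneg.2 ha) (sub_pos.2 hab).le,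
    mul_pos (sub_pos.2 hb) (sub_pos.2 hxa)]

end Lines

lemma exists_combo_eq_of_mem_Icc_s14 {a b x : ℝ} (hx : x ∈ Icc a b) :
    ∃ t ∈ Icc (0 : ℝ) 1, (1 - t) * a + t * b = x := by
  rw [← segment_eq_Icc (hx.1.trans hx.2), segment_eq_image] at hx
  simpa using hx

section Visibility

variable {T : ℝ → ℝ}

lemma sees_iff_le_line {a b c m : ℝ} (hab : a ≤ b) (ha : c + m * a = T a)
    (hb : c + m * b = T b) :
    Sees T a b ↔ ∀ x ∈ Icc a b, T x ≤ c + m * x := by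
  have line_combo : ∀ t : ℝ, c + m * ((1 - t) * a + t * b) = (1 - t) * T a + t * T b := by
    intro t
    rw [← ha, ← hb]
    ring
  constructor
  · intro hs x hx
    obtain ⟨t, ht, rfl⟩ := exists_combo_eq_of_mem_Icc_s14 hx
    exact (hs t ht).trans (line_combo t).ge
  · intro h t ht
    have hmem : (1 - t) * a + t * b ∈ Icc a b := by
      rw [← segment_eq_Icc hab, segment_eq_image]
      exact ⟨t, ht, by simp only [smul_eq_mul]⟩
    exact (h _ hmem).trans (line_combo t).le

lemma Sees.trans_of_le_line {p q r c m : ℝ} (hpq : p ≤ q) (hqr : q ≤ r)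
    (h₁ : Sees T p q) (h₂ : Sees T q r) (hp : c + m * p = T p) (hr : c + m * r = T r)
    (hq : T q ≤ c + m * q) : Sees T p r := by
  rcases hpq.eq_or_lt with rfl | hpq
  · exact h₂
  rcases hqr.eq_or_lt with rfl | hqr
  · exact h₁
  obtain ⟨c₁, m₁, hp₁, hq₁⟩ := exists_line_through_s14 (T p) (T q) hpq.ne
  obtain ⟨c₂, m₂, hq₂, hr₂⟩ := exists_line_through_s14 (T q) (T r) hqr.ne
  rw [sees_iff_le_line hpq.le hp₁ hq₁] at h₁
  rw [sees_iff_le_line hqr.le hq₂ hr₂] at h₂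
  rw [sees_iff_le_line (hpq.trans hqr).le hp hr]
  intro x hx
  rcases le_total x q with hxq | hqx
  · exact (h₁ x ⟨hx.1, hxq⟩).trans <|
      line_le_line_of_le_of_le hx.1 hxq (hp₁.trans hp.symm).le (hq₁ ▸ hq)
  · exact (h₂ x ⟨hqx, hx.2⟩).trans <|
      line_le_line_of_le_of_le hqx hx.2 (hq₂ ▸ hq) (hr₂.trans hr.symm).le

lemma line_lt_of_sees_of_not_sees {u l v p c m : ℝ} (hlv : l < v) (hvp : v < p)
    (huv : u < v) (hl : Sees T l v) (hv : Sees T v p) (hlp : ¬ Sees T l p) (hu : Sees T u p)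
    (hBl : c + m * l = T l) (hBv : c + m * v = T v) : c + m * u < T u := by
  obtain ⟨cD, mD, hDl, hDp⟩ := exists_line_through_s14 (T l) (T p) (hlv.trans hvp).ne
  obtain ⟨cG, mG, hGu, hGp⟩ := exists_line_through_s14 (T u) (T p) (huv.trans hvp).ne
  have hv_above : cD + mD * v < T v := lt_of_not_ge fun h =>
    hlp (hl.trans_of_le_line hlv.le hvp.le hv hDl hDp h)
  have hp_below : T p < c + m * p :=
    hDp ▸ line_lt_line_of_ge_of_lt hlv hvp.le (hBl.trans hDl.symm).le (hBv ▸ hv_above)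
  have hGv : T v ≤ cG + mG * v :=
    (sees_iff_le_line (huv.trans hvp).le hGu hGp).1 hu v ⟨huv.le, hvp.le⟩
  exact hGu ▸ line_lt_line_of_le_of_gt huv hvp (hBv ▸ hGv) (hGp ▸ hp_below)

end Visibility

namespace Terrain

variable {n : ℕ} (Ter : Terrain n) {c m : ℝ}

lemma le_line_on_edge (j : Fin n)
    (h₀ : Ter.T (Ter.x j.castSucc) ≤ c + m * Ter.x j.castSucc)
    (h₁ : Ter.T (Ter.x j.succ) ≤ c + m * Ter.x j.succ) :
    ∀ z ∈ Icc (Ter.x j.castSucc) (Ter.x j.succ), Ter.T z ≤ c + m * z := by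
  intro z hz
  obtain ⟨t, ht, rfl⟩ := exists_combo_eq_of_mem_Icc_s14 hz
  rw [Ter.affine j t ht]
  calc (1 - t) * Ter.T (Ter.x j.castSucc) + t * Ter.T (Ter.x j.succ)
      ≤ (1 - t) * (c + m * Ter.x j.castSucc) + t * (c + m * Ter.x j.succ) :=
        add_le_add (mul_le_mul_of_nonneg_left h₀ (sub_nonneg.2 ht.2))
          (mul_le_mul_of_nonneg_left h₁ ht.1)
    _ = c + m * ((1 - t) * Ter.x j.castSucc + t * Ter.x j.succ) := by ring

lemma le_line_of_le_line_at_vertices {i k : Fin (n + 1)} (hik : i ≤ k)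
    (hvert : ∀ j, i ≤ j → j ≤ k → Ter.T (Ter.x j) ≤ c + m * Ter.x j) :
    ∀ z ∈ Icc (Ter.x i) (Ter.x k), Ter.T z ≤ c + m * z := by
  induction k using Fin.induction with
  | zero =>
    intro z hz
    obtain rfl : i = 0 := le_antisymm hik (Fin.zero_le _)
    obtain rfl : z = Ter.x 0 := le_antisymm hz.2 hz.1
    exact hvert 0 le_rfl le_rfl
  | succ j ih =>
    intro z hz
    rcases hik.eq_or_lt with rfl | hij
    · obtain rfl : z = Ter.x j.succ := le_antisymm hz.2 hz.1
      exact hvert j.succ le_rfl le_rfl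
    rw [← Fin.le_castSucc_iff] at hij
    have hj := Fin.castSucc_le_succ j
    rcases le_total z (Ter.x j.castSucc) with hzj | hjz
    · exact ih hij (fun j' h₁ h₂ => hvert j' h₁ (h₂.trans hj)) z ⟨hz.1, hzj⟩
    · exact Ter.le_line_on_edge j (hvert _ hij hj) (hvert _ (hij.trans hj) le_rfl) z
        ⟨hjz, hz.2⟩

lemma exists_vertex_lt_sees {u l v : ℝ} (hu : u ∈ range Ter.x) (hl : l ∈ range Ter.x)
    (hul : u < l) (hlv : l < v) (hsees : Sees Ter.T l v) (hBl : c + m * l = Ter.T l)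
    (hBv : c + m * v = Ter.T v) (hBu : c + m * u ≤ Ter.T u) :
    ∃ w ∈ range Ter.x, w < l ∧ Sees Ter.T w v := by
  classical
  obtain ⟨iu, rfl⟩ := hu
  obtain ⟨il, rfl⟩ := hl
  set S := Finset.univ.filter fun j => j < il ∧ c + m * Ter.x j ≤ Ter.T (Ter.x j)
  obtain ⟨iw, hiwS, hmax⟩ :=
    S.exists_max_image id ⟨iu, by simp [S, Ter.mono.lt_iff_lt.1 hul, hBu]⟩
  simp only [S, Finset.mem_filter, Finset.mem_univ, true_and, id] at hiwS hmax
  obtain ⟨hiwl, hBw⟩ := hiwS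
  have hwl : Ter.x iw < Ter.x il := Ter.mono hiwl
  have hwv := hwl.trans hlv
  refine ⟨Ter.x iw, mem_range_self iw, hwl, ?_⟩
  obtain ⟨cF, mF, hFw, hFv⟩ := exists_line_through_s14 (Ter.T (Ter.x iw)) (Ter.T v) hwv.ne
  have hBF : ∀ x ∈ Icc (Ter.x iw) v, c + m * x ≤ cF + mF * x := fun x hx =>
    line_le_line_of_le_of_le hx.1 hx.2 (hFw ▸ hBw) (hBv.trans hFv.symm).le
  have hvert : ∀ j, iw ≤ j → j ≤ il → Ter.T (Ter.x j) ≤ cF + mF * Ter.x j := by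
    intro j hwj hjl
    rcases hwj.eq_or_lt with rfl | hwj
    · exact hFw.ge
    have hjB : Ter.T (Ter.x j) ≤ c + m * Ter.x j := by
      rcases hjl.eq_or_lt with rfl | hjl
      · exact hBl.ge
      · exact le_of_not_ge fun h => not_le.2 hwj (hmax j ⟨hjl, h⟩)
    exact hjB.trans (hBF _ ⟨(Ter.mono hwj).le, (Ter.mono.monotone hjl).trans hlv.le⟩)
  rw [sees_iff_le_line hwv.le hFw hFv]
  intro z hz
  rcases le_total z (Ter.x il) with hzl | hlz
  · exact Ter.le_line_of_le_line_at_vertices hiwl.le hvert z ⟨hz.1, hzl⟩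
  · exact ((sees_iff_le_line hlv.le hBl hBv).1 hsees z ⟨hlz, hz.2⟩).trans (hBF z hz)

end Terrain

theorem leftmost_visible_vertex_general {n : ℕ} (Ter : Terrain n)
    (v : ℝ)
    (p : ℝ) (hvp : v < p)
    (l : ℝ) (hlV : l ∈ Set.range Ter.x)
    (hl_sees : Sees Ter.T l v)
    (hl_min : ∀ u ∈ Set.range Ter.x, u < l → ¬ Sees Ter.T u v)
    (hlv : l < v)
    (h_sees : Sees Ter.T v p)
    (h_not : ¬ Sees Ter.T l p) :
    Sees Ter.T v p ∧ ∀ u ∈ Set.range Ter.x, u < v → ¬ Sees Ter.T u p := by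
  refine ⟨h_sees, fun u hu huv hup => ?_⟩
  obtain ⟨c, m, hBl, hBv⟩ := exists_line_through_s14 (Ter.T l) (Ter.T v) hlv.ne
  have hu_above : c + m * u < Ter.T u :=
    line_lt_of_sees_of_not_sees hlv hvp huv hl_sees h_sees h_not hup hBl hBv
  rcases lt_or_ge u l with hul | hlu
  · obtain ⟨w, hw, hwl, hwv⟩ :=
      Ter.exists_vertex_lt_sees hu hlV hul hlv hl_sees hBl hBv hu_above.le
    exact hl_min w hw hwl hwv
  · exact ((sees_iff_le_line hlv.le hBl hBv).1 hl_sees u ⟨hlu, huv.le⟩).not_gt hu_above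

/-- **Lemma 9.** Let `v` be a vertex, `p` a point of the terrain with `v < p`, and `l = L(v)`
the leftmost vertex seeing `v`, with `l < v`. If `v` sees `p` and `l` does not see `p`,
then `v` is the leftmost vertex seeing `p`. -/
theorem leftmost_visible_vertex {n : ℕ} (Ter : Terrain n) (hn : 1 ≤ n)
    (v : ℝ) (hv : v ∈ Set.range Ter.x)
    (p : ℝ) (hp : p ∈ Set.Icc (Ter.x 0) (Ter.x (Fin.last n))) (hvp : v < p)
    (l : ℝ) (hlV : l ∈ Set.range Ter.x)
    (hl_sees : Sees Ter.T l v)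
    (hl_min : ∀ u ∈ Set.range Ter.x, u < l → ¬ Sees Ter.T u v)
    (hlv : l < v)
    (h_sees : Sees Ter.T v p)
    (h_not : ¬ Sees Ter.T l p) :
    Sees Ter.T v p ∧ ∀ u ∈ Set.range Ter.x, u < v → ¬ Sees Ter.T u p :=
  leftmost_visible_vertex_general Ter v p hvp l hlV hl_sees hl_min hlv h_sees h_not
end

section
/- (Supporting claim used in the discretization.) Let v, p, q be points of the terrain with p ≤ q, and suppose T is affine on the interval [p, q]. If v sees p and v sees q, then v sees every point of the interval [p, q]. -/
open Set

theorem exists_convexCombo_eq_of_mem_Icc {a b x : ℝ} (hx : x ∈ Icc a b) :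
    ∃ s ∈ Icc (0 : ℝ) 1, (1 - s) * a + s * b = x := by
  have hx : x ∈ segment ℝ a b := Icc_subset_segment hx
  simpa only [segment_eq_image, smul_eq_mul, mem_image] using hx

section Visibility

variable {T : ℝ → ℝ} {v w : ℝ}

theorem sees_self : Sees T v v := fun t _ => by
  rw [← add_mul, sub_add_cancel, one_mul, ← add_mul, sub_add_cancel, one_mul]

theorem sees_iff_of_lt (h : v < w) :
    Sees T v w ↔ ∀ x ∈ Icc v w, (w - v) * T x ≤ (w - x) * T v + (x - v) * T w := by
  have hwv : 0 < w - v := sub_pos.2 h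
  constructor
  · intro hs x hx
    obtain ⟨s, hs01, rfl⟩ := exists_convexCombo_eq_of_mem_Icc hx
    linear_combination (w - v) * hs s hs01
  · rintro hs t ⟨ht0, ht1⟩
    have := hs ((1 - t) * v + t * w) ⟨by nlinarith, by nlinarith⟩
    refine le_of_mul_le_mul_left ?_ hwv
    linear_combination this

theorem sees_neg_iff : Sees (fun x => T (-x)) (-v) (-w) ↔ Sees T v w := by
  simp only [Sees, mul_neg, ← neg_add, neg_neg]

theorem sees_sub_affine_iff (a b : ℝ) :
    Sees (fun x => T x - (a * x + b)) v w ↔ Sees T v w := by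
  refine forall₂_congr fun t _ => ?_
  constructor <;> intro h <;> linear_combination h

end Visibility

section Vanishing

variable {g : ℝ → ℝ} {p q v z : ℝ}

theorem sees_of_eq_zero_on_Icc_of_lt (hg : ∀ x ∈ Icc p q, g x = 0) (hpq : p < q)
    (hvp : Sees g v p) (hvq : Sees g v q) (hz : z ∈ Icc p q) (hvz : v < z) : Sees g v z := by
  rw [sees_iff_of_lt hvz]
  intro x ⟨hvx, hxz⟩
  rw [hg z hz, mul_zero, add_zero]
  rcases le_or_gt p v with hpv | hvp'
  · rw [hg v ⟨hpv, hvz.le.trans hz.2⟩, hg x ⟨hpv.trans hvx, hxz.trans hz.2⟩]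
    simp
  have hgv : 0 ≤ g v := by
    have := (sees_iff_of_lt (hvp'.trans hpq)).1 hvq p ⟨hvp'.le, hpq.le⟩
    rw [hg p ⟨le_rfl, hpq.le⟩, hg q ⟨hpq.le, le_rfl⟩] at this
    nlinarith
  rcases le_or_gt p x with hpx | hxp
  · rw [hg x ⟨hpx, hxz.trans hz.2⟩]
    nlinarith
  · have := (sees_iff_of_lt hvp').1 hvp x ⟨hvx, hxp.le⟩
    rw [hg p ⟨le_rfl, hpq.le⟩, mul_zero, add_zero] at this
    -- `this` bounds `g x` by `(p - x) / (p - v) * g v`, and that weight is at most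
    -- `(z - x) / (z - v)` because `p ≤ z`.
    nlinarith [mul_nonneg (mul_nonneg (sub_nonneg.2 hz.1) (sub_nonneg.2 hvx)) hgv]

theorem sees_of_eq_zero_on_Icc (hg : ∀ x ∈ Icc p q, g x = 0) (hpq : p < q)
    (hvp : Sees g v p) (hvq : Sees g v q) (hz : z ∈ Icc p q) : Sees g v z := by
  rcases lt_trichotomy v z with hvz | rfl | hzv
  · exact sees_of_eq_zero_on_Icc_of_lt hg hpq hvp hvq hz hvz
  · exact sees_self
  · rw [← sees_neg_iff] at hvp hvq ⊢
    refine sees_of_eq_zero_on_Icc_of_lt (p := -q) (q := -p) (fun x hx => hg _ ?_)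
      (neg_lt_neg hpq) hvq hvp ⟨neg_le_neg hz.2, neg_le_neg hz.1⟩ (neg_lt_neg hzv)
    exact ⟨le_neg_of_le_neg hx.2, neg_le.1 hx.1⟩

end Vanishing

theorem sees_segment_general {n : ℕ} (Ter : Terrain n)
    (v p q : ℝ)
    (haff : ∀ t ∈ Set.Icc (0 : ℝ) 1,
      Ter.T ((1 - t) * p + t * q) = (1 - t) * Ter.T p + t * Ter.T q)
    (hvp : Sees Ter.T v p) (hvq : Sees Ter.T v q) :
    ∀ z ∈ Set.Icc p q, Sees Ter.T v z := by
  intro z hz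
  obtain rfl | hpq := (hz.1.trans hz.2).eq_or_lt
  · rwa [le_antisymm hz.2 hz.1]
  obtain ⟨a, ha⟩ : ∃ a, a * (q - p) = Ter.T q - Ter.T p :=
    ⟨_, div_mul_cancel₀ _ (sub_pos.2 hpq).ne'⟩
  have hg : ∀ x ∈ Icc p q, Ter.T x - (a * x + (Ter.T p - a * p)) = 0 := by
    intro x hx
    obtain ⟨s, hs, rfl⟩ := exists_convexCombo_eq_of_mem_Icc hx
    linear_combination haff s hs - s * ha
  rw [← sees_sub_affine_iff a (Ter.T p - a * p)] at hvp hvq ⊢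
  exact sees_of_eq_zero_on_Icc hg hpq hvp hvq hz

/-- **Supporting claim for the discretization.** If `T` is affine on `[p, q]` and a point `v`
of the terrain sees both `p` and `q`, then `v` sees every point of `[p, q]`. -/
theorem sees_segment {n : ℕ} (Ter : Terrain n) (hn : 1 ≤ n)
    (v p q : ℝ)
    (hv : v ∈ Set.Icc (Ter.x 0) (Ter.x (Fin.last n)))
    (hp : p ∈ Set.Icc (Ter.x 0) (Ter.x (Fin.last n)))
    (hq : q ∈ Set.Icc (Ter.x 0) (Ter.x (Fin.last n)))
    (hpq : p ≤ q)
    (haff : ∀ t ∈ Set.Icc (0 : ℝ) 1,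
      Ter.T ((1 - t) * p + t * q) = (1 - t) * Ter.T p + t * Ter.T q)
    (hvp : Sees Ter.T v p) (hvq : Sees Ter.T v q) :
    ∀ z ∈ Set.Icc p q, Sees Ter.T v z :=
  sees_segment_general Ter v p q haff hvp hvq
end
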